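/- Let φ(z) = z - ln z - 1 and for α ∈ ℝ define Φ(v) = ∫₁ᵛ √φ(z)/z^(α+1) dz. If α < 1/2, then there exist positive constants A₁, A₂ such that |Φ(v)| ≥ A₁ v^(1/2 - α) - A₂ for all v ≥ 1. -/

import Mathlib

/-! Since `log z = 2 log √z ≤ 2 (√z - 1)`, we have `φ(z) ≥ z / 2` for `z ≥ 16`, so the nonnegative
integrand `√φ(z) / z ^ (α + 1)` dominates `z ^ (-1/2 - α) / √2` there. For `α < 1/2` this power
integrates to a positive multiple of `v ^ (1/2 - α)`, up to a constant. -/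

open Real Set intervalIntegral MeasureTheory

theorem le_integral_of_mul_rpow_le {f : ℝ → ℝ} {a b c β v : ℝ} (ha : 0 < a) (hab : a ≤ b)
    (hβ : 0 < β) (hc : 0 ≤ c) (hf : ContinuousOn f (Ici a)) (hf₀ : ∀ z, a ≤ z → 0 ≤ f z)
    (hfb : ∀ z, b ≤ z → c * z ^ (β - 1) ≤ f z) (hv : a ≤ v) :
    c / β * (v ^ β - b ^ β) ≤ ∫ z in a..v, f z := by
  have hb : 0 < b := ha.trans_le hab
  rcases le_or_gt v b with hvb | hbv
  · have hpow : v ^ β ≤ b ^ β := rpow_le_rpow (by linarith) hvb hβ.le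
    have hint : 0 ≤ ∫ z in a..v, f z := integral_nonneg hv fun z hz => hf₀ z hz.1
    nlinarith [div_nonneg hc hβ.le]
  have hpow_int : IntervalIntegrable (fun z => c * z ^ (β - 1)) volume b v :=
    (continuousOn_const.mul (continuousOn_id.rpow_const fun z hz => Or.inl
      (hb.trans_le hz.1).ne')).intervalIntegrable_of_Icc hbv.le
  calc c / β * (v ^ β - b ^ β) = ∫ z in b..v, c * z ^ (β - 1) := by
        rw [intervalIntegral.integral_const_mul, integral_rpow (Or.inl (by linarith)), sub_add_cancel]
        ring
    _ ≤ ∫ z in b..v, f z :=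
        integral_mono_on hbv.le hpow_int
          ((hf.mono fun z hz => hab.trans hz.1).intervalIntegrable_of_Icc hbv.le)
          fun z hz => hfb z hz.1
    _ ≤ ∫ z in a..v, f z :=
        integral_mono_interval hab hbv.le le_rfl
          ((ae_restrict_mem measurableSet_Ioc).mono fun z hz => hf₀ z hz.1.le)
          ((hf.mono fun z hz => hz.1).intervalIntegrable_of_Icc hv)

theorem half_le_sub_log_sub_one {z : ℝ} (hz : 16 ≤ z) : z / 2 ≤ z - log z - 1 := by
  have hz₀ : 0 < z := by linarith
  have hsqrt : 4 ≤ √z := by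
    rw [show (4 : ℝ) = √16 by rw [show (16 : ℝ) = 4 ^ 2 by norm_num, sqrt_sq (by norm_num)]]
    exact sqrt_le_sqrt hz
  have hlog : log z = 2 * log √z := by rw [log_sqrt hz₀.le]; ring
  have hlog_le : log √z ≤ √z - 1 := log_le_sub_one_of_pos (sqrt_pos.mpr hz₀)
  nlinarith [sq_sqrt hz₀.le]

theorem continuousOn_sqrt_sub_log_sub_one_div_rpow (α : ℝ) :
    ContinuousOn (fun z => √(z - log z - 1) / z ^ (α + 1)) (Ioi 0) :=
  ((continuousOn_id.sub (continuousOn_log.mono fun _ hz => ne_of_gt hz)).sub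
    continuousOn_const).sqrt.div (continuousOn_id.rpow_const fun _ hz => Or.inl (ne_of_gt hz))
    fun _ hz => (rpow_pos_of_pos hz _).ne'

theorem inv_sqrt_two_mul_rpow_le {α z : ℝ} (hz : 16 ≤ z) :
    (√2)⁻¹ * z ^ (1 / 2 - α - 1) ≤ √(z - log z - 1) / z ^ (α + 1) := by
  have hz₀ : 0 < z := by linarith
  calc (√2)⁻¹ * z ^ (1 / 2 - α - 1) = √(z / 2) / z ^ (α + 1) := by
        rw [sqrt_div hz₀.le, show 1 / 2 - α - 1 = 1 / 2 - (α + 1) by ring, rpow_sub hz₀,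
          ← sqrt_eq_rpow]
        ring
    _ ≤ √(z - log z - 1) / z ^ (α + 1) := by
        gcongr
        exact half_le_sub_log_sub_one hz

theorem Phi_growth_atTop (α : ℝ) (hα : α < 1 / 2) :
    ∃ A₁ A₂ : ℝ, 0 < A₁ ∧ 0 < A₂ ∧
      ∀ v : ℝ, 1 ≤ v →
        A₁ * v ^ (1 / 2 - α) - A₂ ≤
          |∫ z in (1:ℝ)..v, Real.sqrt (z - Real.log z - 1) / z ^ (α + 1)| := by
  have hβ : 0 < 1 / 2 - α := by linarith
  set A₁ := (√2)⁻¹ / (1 / 2 - α)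
  refine ⟨A₁, A₁ * 16 ^ (1 / 2 - α), by positivity, by positivity, fun v hv => ?_⟩
  have hcont : ContinuousOn (fun z => √(z - log z - 1) / z ^ (α + 1)) (Ici 1) :=
    (continuousOn_sqrt_sub_log_sub_one_div_rpow α).mono fun z (hz : 1 ≤ z) =>
      show 0 < z by linarith
  have hnonneg (z : ℝ) (hz : 1 ≤ z) : 0 ≤ √(z - log z - 1) / z ^ (α + 1) := by
    have : 0 < z := by linarith
    positivity
  have hgrowth := le_integral_of_mul_rpow_le (b := 16) (c := (√2)⁻¹) one_pos (by norm_num) hβ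
    (by positivity) hcont hnonneg (fun z hz => inv_sqrt_two_mul_rpow_le hz) hv
  rw [abs_of_nonneg (integral_nonneg hv fun z hz => hnonneg z hz.1)]
  linarith
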